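/- arXiv:math/0512200 — 2 statements merged into one kernel-verified Lean document; each statement's English description precedes it below -/
import Mathlib

section
/- Let Q ⊆ ℝ × ℝ^d be an open set. Let t_n → t in ℝ, let x^n, x : [0,∞) → ℝ^d be continuous paths such that x^n converges to x uniformly on every compact subset of [0,∞), and let τ_n = inf{s ≥ 0 : (t_n+s, x^n(s)) ∉ Q} and τ = inf{s ≥ 0 : (t+s, x(s)) ∉ Q}, taken as elements of [0,∞]. Then τ ≤ liminf_{n→∞} τ_n; that is, the first exit time from an open set is lower semicontinuous with respect to locally uniform convergence of the initial time and the path. -/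
open scoped ENNReal

/-- The first exit time of the trajectory `s ↦ (t + s, x s)` from a set
`Q ⊆ ℝ × ℝ^d`, as an element of `[0,∞]` (with `inf ∅ = ∞`). -/
noncomputable def exitTime {d : ℕ} (Q : Set (ℝ × (Fin d → ℝ))) (t : ℝ)
    (x : ℝ → (Fin d → ℝ)) : ℝ≥0∞ :=
  sInf (ENNReal.ofReal '' {s : ℝ | 0 ≤ s ∧ (t + s, x s) ∉ Q})

/-- The first exit time from an open set `Q ⊆ ℝ × ℝ^d` is lower semicontinuous with
respect to convergence of the initial time and locally uniform convergence of the path: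
if `tₙ → t` and `xₙ → x` uniformly on every compact subset of `[0,∞)`, then
`τ ≤ liminf τₙ`. -/
theorem exitTime_lowerSemicontinuous {d : ℕ} (Q : Set (ℝ × (Fin d → ℝ)))
    (hQ : IsOpen Q) (t : ℝ) (tseq : ℕ → ℝ)
    (ht : Filter.Tendsto tseq Filter.atTop (nhds t))
    (x : ℝ → (Fin d → ℝ)) (xseq : ℕ → ℝ → (Fin d → ℝ))
    (hx : ContinuousOn x (Set.Ici 0)) (hxn : ∀ n, ContinuousOn (xseq n) (Set.Ici 0))
    (hconv : ∀ K : Set ℝ, K ⊆ Set.Ici 0 → IsCompact K →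
      TendstoUniformlyOn xseq x Filter.atTop K) :
    exitTime Q t x ≤ Filter.liminf (fun n => exitTime Q (tseq n) (xseq n)) Filter.atTop := by
  refine le_of_forall_lt_imp_le_of_dense fun b hb => ?_
  have hbtop : b ≠ ⊤ := (lt_of_lt_of_le hb le_top).ne
  set a : ℝ := b.toReal with ha_def
  have ha : 0 ≤ a := ENNReal.toReal_nonneg
  have hba : b = ENNReal.ofReal a := (ENNReal.ofReal_toReal hbtop).symm
  -- Step 1: the trajectory stays in Q on [0, a]
  have hin : ∀ s, 0 ≤ s → s ≤ a → (t + s, x s) ∈ Q := by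
    intro s hs0 hsa
    by_contra hnot
    have hmem : ENNReal.ofReal s ∈
        ENNReal.ofReal '' {s : ℝ | 0 ≤ s ∧ (t + s, x s) ∉ Q} :=
      ⟨s, ⟨hs0, hnot⟩, rfl⟩
    have : exitTime Q t x ≤ ENNReal.ofReal s := sInf_le hmem
    have : exitTime Q t x ≤ b := by
      rw [hba]; exact this.trans (ENNReal.ofReal_le_ofReal hsa)
    exact absurd hb (not_lt_of_ge this)
  -- Step 2: compactness gives a uniform thickening inside Q
  set K : Set (ℝ × (Fin d → ℝ)) := (fun s => (t + s, x s)) '' Set.Icc 0 a with hK_def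
  have hKcomp : IsCompact K := by
    apply isCompact_Icc.image_of_continuousOn
    exact ((continuous_const.add continuous_id).continuousOn).prodMk
      (hx.mono (Set.Icc_subset_Ici_self))
  have hKQ : K ⊆ Q := by
    rintro p ⟨s, ⟨hs0, hsa⟩, rfl⟩
    exact hin s hs0 hsa
  obtain ⟨ε, hε, hthick⟩ := hKcomp.exists_thickening_subset_open hQ hKQ
  -- Step 3: eventually the approximating trajectories stay in Q up to time a
  have h1 : ∀ᶠ n in Filter.atTop, dist (tseq n) t < ε :=
    ht (Metric.ball_mem_nhds t hε)
  have h2 : ∀ᶠ n in Filter.atTop, ∀ s ∈ Set.Icc 0 a, dist (x s) (xseq n s) < ε := by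
    have := (Metric.tendstoUniformlyOn_iff.mp
      (hconv (Set.Icc 0 a) Set.Icc_subset_Ici_self isCompact_Icc)) ε hε
    exact this
  have hev : ∀ᶠ n in Filter.atTop, b ≤ exitTime Q (tseq n) (xseq n) := by
    filter_upwards [h1, h2] with n hn1 hn2
    rw [hba]
    apply le_sInf
    rintro y ⟨s, ⟨hs0, hsQ⟩, rfl⟩
    apply ENNReal.ofReal_le_ofReal
    by_contra hlt
    push_neg at hlt
    have hsa : s ≤ a := hlt.le
    have hmemK : (t + s, x s) ∈ K := ⟨s, ⟨hs0, hsa⟩, rfl⟩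
    have hdist : dist ((tseq n + s, xseq n s) : ℝ × (Fin d → ℝ)) (t + s, x s) < ε := by
      rw [Prod.dist_eq]
      apply max_lt
      · simpa [Real.dist_eq] using hn1
      · rw [dist_comm]; exact hn2 s ⟨hs0, hsa⟩
    have : (tseq n + s, xseq n s) ∈ Metric.thickening ε K :=
      Metric.mem_thickening_iff.mpr ⟨(t + s, x s), hmemK, hdist⟩
    exact hsQ (hthick this)
  exact Filter.le_liminf_of_le (by isBoundedDefault) hev
end

section
/- Let λ ≥ 0, μ ≥ 0, K₁ ≥ 0 and s ≥ 0. Let c₁, c₂ : [0,s] → ℝ be integrable functions with c₁(r) ≥ λ and c₂(r) ≥ λ for all r ∈ [0,s], let f₁, f₂ ∈ ℝ satisfy |f₁| ≤ K₁ and |f₂| ≤ K₁, and let d : [0,s] → [0,∞) be a continuous function such that |f₁ − f₂| ≤ K₁ d(s) and |c₁(r) − c₂(r)| ≤ K₁ d(r) for all r ∈ [0,s]. Then |f₁ · exp(−∫₀^s c₁(r) dr) − f₂ · exp(−∫₀^s c₂(r) dr)| ≤ K₁(1 + K₁) · e^{(μ + 1 − λ)s} · sup_{r ∈ [0,s]}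 e^{−μ r} d(r). -/
/-!
Put `M = sup_{[0,s]} e^{-μr} d(r)`, so that `d ≤ e^{μs} M` on `[0,s]`. Both exponents
`∫₀ˢ cᵢ` are at least `λs` and differ by at most `K₁ e^{μs} M s`, and `e^{-x}` is
`e^{-λs}`-Lipschitz on `[λs, ∞)`. Splitting
`f₁e^{-A} - f₂e^{-B} = (f₁ - f₂)e^{-A} + f₂(e^{-A} - e^{-B})` gives the bound
`K₁ e^{(μ-λ)s} M (1 + K₁s)`, and `1 + K₁s ≤ (1 + K₁)e^s`.
-/

open MeasureTheory Set

namespace Real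

theorem abs_exp_neg_sub_exp_neg_le {L A B : ℝ} (hA : L ≤ A) (hB : L ≤ B) :
    |exp (-A) - exp (-B)| ≤ exp (-L) * |A - B| := by
  wlog hAB : A ≤ B generalizing A B
  · rw [abs_sub_comm, abs_sub_comm A]
    exact this hB hA (le_of_not_ge hAB)
  have hexp : exp (-B) = exp (-A) * exp (A - B) := by rw [← exp_add]; ring_nf
  have h₀ : 0 ≤ 1 - exp (A - B) := sub_nonneg.2 (exp_le_one_iff.2 (sub_nonpos.2 hAB))
  have h₁ : 1 - exp (A - B) ≤ B - A := by linarith [add_one_le_exp (A - B)]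
  calc |exp (-A) - exp (-B)| = exp (-A) * (1 - exp (A - B)) := by
        rw [hexp, ← mul_one_sub, abs_of_nonneg (by positivity)]
    _ ≤ exp (-L) * (B - A) := mul_le_mul (exp_le_exp.2 (neg_le_neg hA)) h₁ h₀ (exp_pos _).le
    _ = exp (-L) * |A - B| := by rw [abs_of_nonpos (sub_nonpos.2 hAB), neg_sub]

theorem one_add_mul_le_one_add_mul_exp {K s : ℝ} (hK : 0 ≤ K) (hs : 0 ≤ s) :
    1 + K * s ≤ (1 + K) * exp s := by
  nlinarith [add_one_le_exp s, one_le_exp hs]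

end Real

theorem abs_mul_sub_mul_le (a b x y : ℝ) :
    |a * x - b * y| ≤ |a - b| * |x| + |b| * |x - y| := by
  calc |a * x - b * y| = |(a - b) * x + b * (x - y)| := by ring_nf
    _ ≤ |a - b| * |x| + |b| * |x - y| := by
        rw [← abs_mul, ← abs_mul]; exact abs_add_le _ _

theorem abs_mul_exp_neg_sub_mul_exp_neg_le {L A B a b K δ ε : ℝ} (hA : L ≤ A) (hB : L ≤ B)
    (hb : |b| ≤ K) (hab : |a - b| ≤ δ) (hAB : |A - B| ≤ ε) :
    |a * Real.exp (-A) - b * Real.exp (-B)| ≤ Real.exp (-L) * (δ + K * ε) := by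
  have hK : 0 ≤ K := (abs_nonneg b).trans hb
  calc |a * Real.exp (-A) - b * Real.exp (-B)|
      ≤ |a - b| * |Real.exp (-A)| + |b| * |Real.exp (-A) - Real.exp (-B)| :=
        abs_mul_sub_mul_le _ _ _ _
    _ ≤ δ * Real.exp (-L) + K * (Real.exp (-L) * ε) := by
        rw [abs_of_pos (Real.exp_pos _)]
        gcongr
        · exact (abs_nonneg _).trans hab
        · exact (Real.abs_exp_neg_sub_exp_neg_le hA hB).trans (by gcongr)
    _ = Real.exp (-L) * (δ + K * ε) := by ring

theorem mul_sub_le_intervalIntegral {f : ℝ → ℝ} {a b C : ℝ} (hab : a ≤ b)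
    (hf : IntervalIntegrable f volume a b) (h : ∀ x ∈ Icc a b, C ≤ f x) :
    C * (b - a) ≤ ∫ x in a..b, f x := by
  simpa [mul_comm] using intervalIntegral.integral_mono_on hab intervalIntegrable_const hf h

theorem le_exp_mul_sSup_exp_neg_mul {S : Set ℝ} {d : ℝ → ℝ} (μ : ℝ) (hS : IsCompact S)
    (hd : ContinuousOn d S) {r : ℝ} (hr : r ∈ S) :
    d r ≤ Real.exp (μ * r) * sSup ((fun r => Real.exp (-μ * r) * d r) '' S) := by
  have hbdd : BddAbove ((fun r => Real.exp (-μ * r) * d r) '' S) :=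
    (hS.image_of_continuousOn (by fun_prop)).bddAbove
  calc d r = Real.exp (μ * r) * (Real.exp (-μ * r) * d r) := by
        rw [← mul_assoc, ← Real.exp_add]; simp
    _ ≤ _ := by gcongr; exact le_csSup hbdd (mem_image_of_mem _ hr)

theorem discounted_difference_estimate_general
    (lam μ K₁ s : ℝ) (hμ : 0 ≤ μ) (hK₁ : 0 ≤ K₁) (hs : 0 ≤ s)
    (c₁ c₂ : ℝ → ℝ)
    (hc₁i : IntervalIntegrable c₁ volume 0 s)
    (hc₂i : IntervalIntegrable c₂ volume 0 s)
    (hc₁ : ∀ r ∈ Set.Icc (0 : ℝ) s, lam ≤ c₁ r)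
    (hc₂ : ∀ r ∈ Set.Icc (0 : ℝ) s, lam ≤ c₂ r)
    (f₁ f₂ : ℝ) (hf₂ : |f₂| ≤ K₁)
    (dd : ℝ → ℝ) (hdc : ContinuousOn dd (Set.Icc 0 s))
    (hdnn : ∀ r ∈ Set.Icc (0 : ℝ) s, 0 ≤ dd r)
    (hfd : |f₁ - f₂| ≤ K₁ * dd s)
    (hcd : ∀ r ∈ Set.Icc (0 : ℝ) s, |c₁ r - c₂ r| ≤ K₁ * dd r) :
    |f₁ * Real.exp (-∫ r in (0 : ℝ)..s, c₁ r) -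
        f₂ * Real.exp (-∫ r in (0 : ℝ)..s, c₂ r)| ≤
      K₁ * (1 + K₁) * Real.exp ((μ + 1 - lam) * s) *
        sSup ((fun r => Real.exp (-μ * r) * dd r) '' Set.Icc 0 s) := by
  set M := sSup ((fun r => Real.exp (-μ * r) * dd r) '' Set.Icc 0 s)
  set A := ∫ r in (0 : ℝ)..s, c₁ r
  set B := ∫ r in (0 : ℝ)..s, c₂ r
  have hM : 0 ≤ M := Real.sSup_nonneg <| forall_mem_image.2 fun r hr =>
    mul_nonneg (Real.exp_pos _).le (hdnn r hr)
  have hd : ∀ r ∈ Icc 0 s, K₁ * dd r ≤ K₁ * (Real.exp (μ * s) * M) := fun r hr => by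
    grw [le_exp_mul_sSup_exp_neg_mul μ isCompact_Icc hdc hr, hr.2]
  have hA : lam * s ≤ A := by simpa using mul_sub_le_intervalIntegral hs hc₁i hc₁
  have hB : lam * s ≤ B := by simpa using mul_sub_le_intervalIntegral hs hc₂i hc₂
  have hAB : |A - B| ≤ K₁ * (Real.exp (μ * s) * M) * s := by
    rw [← intervalIntegral.integral_sub hc₁i hc₂i]
    have hbound : ∀ r ∈ uIoc 0 s, ‖c₁ r - c₂ r‖ ≤ K₁ * (Real.exp (μ * s) * M) := by
      intro r hr
      rw [uIoc_of_le hs] at hr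
      exact (hcd r (Ioc_subset_Icc_self hr)).trans (hd r (Ioc_subset_Icc_self hr))
    simpa [abs_of_nonneg hs] using intervalIntegral.norm_integral_le_of_norm_le_const hbound
  calc |f₁ * Real.exp (-A) - f₂ * Real.exp (-B)|
      ≤ Real.exp (-(lam * s)) *
          (K₁ * (Real.exp (μ * s) * M) + K₁ * (K₁ * (Real.exp (μ * s) * M) * s)) :=
        abs_mul_exp_neg_sub_mul_exp_neg_le hA hB hf₂ (hfd.trans (hd s (right_mem_Icc.2 hs))) hAB
    _ = K₁ * (Real.exp (μ * s) * Real.exp (-(lam * s))) * M * (1 + K₁ * s) := by ring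
    _ ≤ K₁ * (Real.exp (μ * s) * Real.exp (-(lam * s))) * M * ((1 + K₁) * Real.exp s) := by
        gcongr; exact Real.one_add_mul_le_one_add_mul_exp hK₁ hs
    _ = K₁ * (1 + K₁) * Real.exp ((μ + 1 - lam) * s) * M := by
        rw [show (μ + 1 - lam) * s = μ * s + -(lam * s) + s by ring, Real.exp_add, Real.exp_add]
        ring

/-- The pointwise discounted-difference estimate from the proof of Theorem 2.6:
if `c₁, c₂ ≥ λ` are integrable on `[0,s]`, `|f₁|, |f₂| ≤ K₁`, `d ≥ 0` is continuous on
`[0,s]`, `|f₁ − f₂| ≤ K₁ d(s)` and `|c₁(r) − c₂(r)| ≤ K₁ d(r)` on `[0,s]`, then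
`|f₁ e^{-∫₀ˢ c₁} − f₂ e^{-∫₀ˢ c₂}| ≤ K₁(1 + K₁) e^{(μ+1−λ)s} sup_{r ∈ [0,s]} e^{-μr} d(r)`
for any `μ ≥ 0`. -/
theorem discounted_difference_estimate
    (lam μ K₁ s : ℝ) (hlam : 0 ≤ lam) (hμ : 0 ≤ μ) (hK₁ : 0 ≤ K₁) (hs : 0 ≤ s)
    (c₁ c₂ : ℝ → ℝ)
    (hc₁i : IntervalIntegrable c₁ volume 0 s)
    (hc₂i : IntervalIntegrable c₂ volume 0 s)
    (hc₁ : ∀ r ∈ Set.Icc (0 : ℝ) s, lam ≤ c₁ r)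
    (hc₂ : ∀ r ∈ Set.Icc (0 : ℝ) s, lam ≤ c₂ r)
    (f₁ f₂ : ℝ) (hf₁ : |f₁| ≤ K₁) (hf₂ : |f₂| ≤ K₁)
    (dd : ℝ → ℝ) (hdc : ContinuousOn dd (Set.Icc 0 s))
    (hdnn : ∀ r ∈ Set.Icc (0 : ℝ) s, 0 ≤ dd r)
    (hfd : |f₁ - f₂| ≤ K₁ * dd s)
    (hcd : ∀ r ∈ Set.Icc (0 : ℝ) s, |c₁ r - c₂ r| ≤ K₁ * dd r) :
    |f₁ * Real.exp (-∫ r in (0 : ℝ)..s, c₁ r) -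
        f₂ * Real.exp (-∫ r in (0 : ℝ)..s, c₂ r)| ≤
      K₁ * (1 + K₁) * Real.exp ((μ + 1 - lam) * s) *
        sSup ((fun r => Real.exp (-μ * r) * dd r) '' Set.Icc 0 s) :=
  discounted_difference_estimate_general lam μ K₁ s hμ hK₁ hs c₁ c₂ hc₁i hc₂i hc₁ hc₂ f₁ f₂ hf₂ dd
    hdc hdnn hfd hcd
end
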